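/- Let P, Q be probability distributions on ℝ with everywhere positive continuous densities f_X, f_Y and CDFs F_X, F_Y, and let X ∼ P, Y ∼ Q. Let Q_P^{HD} denote the law of W = min{F_Y(X), 1 − F_Y(X)} (whose density on [0,1/2] is f_W(z) = f_X(F_Y⁻¹(z))/f_Y(F_Y⁻¹(z)) + f_X(F_Y⁻¹(1−z))/f_Y(F_Y⁻¹(1−z))), and let U denote the uniform distribution on [0, 1/2] (density 2 on [0,1/2]). Then TVD(Q_P^{HD}, U) ≤ TVD(P, Q), where TVD denotes total variation distance. By symmetry the analogous bound TVD(P_Q^{HD}, U) ≤ TVD(P, Q) also holds, where P_Q^{HD} is the law of min{F_X(Y), 1 − F_X(Y)}. -/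

import Mathlib

open MeasureTheory Set
open scoped ENNReal

/-- The total variation distance between two measures on `ℝ`, computed via their
densities (Radon–Nikodym derivatives) with respect to Lebesgue measure:
`TVD(P,Q) = (1/2) ∫ |p(x) - q(x)| dx`. -/
noncomputable def TVD (μ ν : Measure ℝ) : ℝ :=
  (1 / 2) * ∫ x, |(μ.rnDeriv volume x).toReal - (ν.rnDeriv volume x).toReal|

/-!
`F_Y` pushes the atomless law `Q` forward to the uniform law on `[0, 1]` (probability integral
transform), and `u ↦ min u (1 - u)` folds that onto the uniform law on `[0, 1/2]`. So the left-hand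
side is the distance between the images of `P` and `Q` under one measurable map, and total
variation cannot increase under a map: it is the supremum of `P B - Q B` over Borel sets `B`.
-/

open ProbabilityTheory

theorem TVD_comm (μ ν : Measure ℝ) : TVD μ ν = TVD ν μ := by
  simp only [TVD, abs_sub_comm]

theorem measureReal_eq_setIntegral_rnDeriv_add_singularPart {α : Type*} [MeasurableSpace α]
    (μ ν : Measure α) [IsFiniteMeasure μ] [SigmaFinite ν] (s : Set α) :
    μ.real s = (∫ x in s, (μ.rnDeriv ν x).toReal ∂ν) + (μ.singularPart ν).real s := by
  conv_lhs => rw [← μ.singularPart_add_rnDeriv ν]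
  rw [measureReal_add_apply, ← Measure.setIntegral_toReal_rnDeriv_eq_withDensity, add_comm]

section TotalVariation

variable {μ ν : Measure ℝ}

theorem TVD_eq_integral_max_add_singularPart [IsProbabilityMeasure μ] [IsProbabilityMeasure ν]
    (hν : ν ≪ volume) :
    TVD μ ν = (∫ x, max ((μ.rnDeriv volume x).toReal - (ν.rnDeriv volume x).toReal) 0)
      + (μ.singularPart volume).real univ / 2 := by
  unfold TVD
  set d : ℝ → ℝ := fun x => (μ.rnDeriv volume x).toReal - (ν.rnDeriv volume x).toReal
  have hd : Integrable d := Measure.integrable_toReal_rnDeriv.sub Measure.integrable_toReal_rnDeriv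
  have hint : ∫ x, d x = -(μ.singularPart volume).real univ := by
    rw [integral_sub Measure.integrable_toReal_rnDeriv Measure.integrable_toReal_rnDeriv,
      Measure.integral_toReal_rnDeriv', Measure.integral_toReal_rnDeriv hν]
    simp
  have habs : ∀ x, |d x| = 2 * max (d x) 0 - d x := fun x => by
    rcases le_total 0 (d x) with h | h
    · rw [abs_of_nonneg h, max_eq_left h]; ring
    · rw [abs_of_nonpos h, max_eq_right h]; ring
  change (1 / 2) * ∫ x, |d x| = (∫ x, max (d x) 0) + _
  simp only [habs]
  rw [integral_sub (hd.pos_part.const_mul 2) hd, integral_const_mul, hint]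
  ring

theorem measureReal_sub_le_TVD [IsProbabilityMeasure μ] [IsProbabilityMeasure ν]
    (hμ : μ ≪ volume) (hν : ν ≪ volume) (s : Set ℝ) :
    μ.real s - ν.real s ≤ TVD μ ν := by
  rw [TVD_eq_integral_max_add_singularPart hν, Measure.singularPart_eq_zero_of_ac hμ,
    ← Measure.setIntegral_toReal_rnDeriv hμ, ← Measure.setIntegral_toReal_rnDeriv hν,
    ← integral_sub Measure.integrable_toReal_rnDeriv.integrableOn
      Measure.integrable_toReal_rnDeriv.integrableOn]
  set d : ℝ → ℝ := fun x => (μ.rnDeriv volume x).toReal - (ν.rnDeriv volume x).toReal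
  have hd : Integrable d := Measure.integrable_toReal_rnDeriv.sub Measure.integrable_toReal_rnDeriv
  calc ∫ x in s, d x ≤ ∫ x in s, max (d x) 0 :=
        integral_mono hd.integrableOn hd.pos_part.integrableOn fun x => le_max_left _ _
    _ ≤ ∫ x, max (d x) 0 :=
        setIntegral_le_integral hd.pos_part (.of_forall fun x => le_max_right _ _)
    _ = _ := by rw [measureReal_zero_apply, zero_div, add_zero]

theorem TVD_le_of_forall_measureReal_sub_le [IsProbabilityMeasure μ] [IsProbabilityMeasure ν]
    (hν : ν ≪ volume) {c : ℝ} (h : ∀ s, MeasurableSet s → μ.real s - ν.real s ≤ c) :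
    TVD μ ν ≤ c := by
  rw [TVD_eq_integral_max_add_singularPart hν]
  set p : ℝ → ℝ := fun x => (μ.rnDeriv volume x).toReal
  set q : ℝ → ℝ := fun x => (ν.rnDeriv volume x).toReal
  obtain ⟨N, hN, hsingN, hvolN⟩ := μ.mutuallySingular_singularPart volume
  show (∫ x, max (p x - q x) 0) + _ ≤ c
  -- the Lebesgue-null set `Nᶜ` carries the singular part of `μ`
  set E := {x | q x < p x} ∪ Nᶜ
  have hpq : MeasurableSet {x | q x < p x} :=
    measurableSet_lt (Measure.measurable_rnDeriv _ _).ennreal_toReal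
      (Measure.measurable_rnDeriv _ _).ennreal_toReal
  have hsingE : (μ.singularPart volume).real E = (μ.singularPart volume).real univ :=
    measureReal_congr <| ae_eq_univ.2 <|
      measure_mono_null (compl_subset_comm.1 subset_union_right) hsingN
  have hdE : ∫ x in E, (p x - q x) = ∫ x, max (p x - q x) 0 := by
    rw [Measure.restrict_congr_set (union_ae_eq_left_of_ae_eq_empty (ae_eq_empty.2 hvolN)),
      ← setIntegral_eq_integral_of_forall_compl_eq_zero fun x hx => max_eq_right ?_]
    · exact setIntegral_congr_fun hpq fun x hx => (max_eq_left (sub_nonneg.2 (le_of_lt hx))).symm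
    · exact sub_nonpos.2 (not_lt.1 hx)
  have hμE : μ.real E = (∫ x in E, p x) + (μ.singularPart volume).real E :=
    measureReal_eq_setIntegral_rnDeriv_add_singularPart μ volume E
  have hνE : ν.real E = ∫ x in E, q x := (Measure.setIntegral_toReal_rnDeriv hν E).symm
  have hsub : ∫ x in E, (p x - q x) = (∫ x in E, p x) - ∫ x in E, q x :=
    integral_sub Measure.integrable_toReal_rnDeriv.integrableOn
      Measure.integrable_toReal_rnDeriv.integrableOn
  linarith [h E (hpq.union hN.compl), measureReal_nonneg (μ := μ.singularPart volume) (s := univ)]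

end TotalVariation

section DataProcessing

variable {μ ν : Measure ℝ} [IsProbabilityMeasure μ] [IsProbabilityMeasure ν]

theorem TVD_map_le (hμ : μ ≪ volume) (hν : ν ≪ volume) {f : ℝ → ℝ} (hf : Measurable f)
    (hfν : ν.map f ≪ volume) : TVD (μ.map f) (ν.map f) ≤ TVD μ ν := by
  have := Measure.isProbabilityMeasure_map (μ := μ) hf.aemeasurable
  have := Measure.isProbabilityMeasure_map (μ := ν) hf.aemeasurable
  refine TVD_le_of_forall_measureReal_sub_le hfν fun s hs => ?_
  rw [map_measureReal_apply hf hs, map_measureReal_apply hf hs]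
  exact measureReal_sub_le_TVD hμ hν _

end DataProcessing

section ProbabilityIntegralTransform

variable (μ : Measure ℝ) [IsProbabilityMeasure μ] [NullSingletonClass μ]

theorem continuous_cdf : Continuous (cdf μ) := by
  refine continuous_iff_continuousAt.2 fun a =>
    (monotone_cdf μ).continuousAt_iff_leftLim_eq_rightLim.2 ?_
  have h := (cdf μ).measure_singleton a
  rw [measure_cdf, measure_singleton, eq_comm, ENNReal.ofReal_eq_zero, sub_nonpos] at h
  rw [(cdf μ).rightLim_eq]
  exact le_antisymm ((monotone_cdf μ).leftLim_le le_rfl) h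

theorem measure_setOf_cdf_le {t : ℝ} (ht0 : 0 ≤ t) (ht1 : t < 1) :
    μ {x | cdf μ x ≤ t} = ENNReal.ofReal t := by
  set S := {x | cdf μ x ≤ t}
  obtain ⟨y, hy⟩ := ((tendsto_cdf_atTop μ).eventually (eventually_gt_nhds ht1)).exists
  refine le_antisymm ?_ ?_
  · rcases S.eq_empty_or_nonempty with hS | hS
    · simp [hS]
    have hbdd : BddAbove S := ⟨y, fun x hx => not_lt.1 fun hyx =>
      (hy.trans_le ((monotone_cdf μ) hyx.le)).not_ge hx⟩
    have hsup : sSup S ∈ S :=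
      (isClosed_le (continuous_cdf μ) continuous_const).csSup_mem hS hbdd
    calc μ S ≤ μ (Iic (sSup S)) := measure_mono fun x hx => le_csSup hbdd hx
      _ = ENNReal.ofReal (cdf μ (sSup S)) := (ofReal_cdf μ _).symm
      _ ≤ ENNReal.ofReal t := ENNReal.ofReal_le_ofReal hsup
  · rcases ht0.eq_or_lt with rfl | ht0
    · simp
    obtain ⟨z, hz⟩ := ((tendsto_cdf_atBot μ).eventually (eventually_lt_nhds ht0)).exists
    obtain ⟨c, hc⟩ := intermediate_value_univ z y (continuous_cdf μ) ⟨hz.le, hy.le⟩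
    calc ENNReal.ofReal t = μ (Iic c) := by rw [← ofReal_cdf, hc]
      _ ≤ μ S := measure_mono fun x (hx : x ≤ c) => (monotone_cdf μ hx).trans hc.le

theorem map_cdf_eq_restrict_Icc : μ.map (cdf μ) = volume.restrict (Icc 0 1) := by
  have hm : Measurable (cdf μ) := (continuous_cdf μ).measurable
  have := Measure.isProbabilityMeasure_map (μ := μ) hm.aemeasurable
  refine Measure.ext_of_Iic _ _ fun t => ?_
  rw [Measure.map_apply hm measurableSet_Iic, Measure.restrict_apply measurableSet_Iic]
  rcases lt_or_ge t 0 with ht0 | ht0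
  · have hpre : cdf μ ⁻¹' Iic t = ∅ :=
      eq_empty_of_forall_notMem fun x (hx : cdf μ x ≤ t) =>
        (hx.trans_lt ht0).not_ge (cdf_nonneg μ x)
    have hIcc : Iic t ∩ Icc 0 1 = ∅ :=
      eq_empty_of_forall_notMem fun x hx => (hx.1.trans_lt ht0).not_ge hx.2.1
    rw [hpre, hIcc, measure_empty, measure_empty]
  rcases lt_or_ge t 1 with ht1 | ht1
  · have hIcc : Iic t ∩ Icc 0 1 = Icc 0 t :=
      Set.ext fun x => ⟨fun h => ⟨h.2.1, h.1⟩, fun h => ⟨h.2, h.1, h.2.trans ht1.le⟩⟩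
    rw [hIcc, Real.volume_Icc, sub_zero]
    exact measure_setOf_cdf_le μ ht0 ht1
  · have hpre : cdf μ ⁻¹' Iic t = univ := eq_univ_of_forall fun x => (cdf_le_one μ x).trans ht1
    rw [hpre, inter_eq_right.2 fun x hx => hx.2.trans ht1]
    simp

end ProbabilityIntegralTransform

theorem map_min_one_sub_restrict_Icc :
    (volume.restrict (Icc (0 : ℝ) 1)).map (fun u => min u (1 - u))
      = (2 : ℝ≥0∞) • volume.restrict (Icc (0 : ℝ) (1 / 2)) := by
  have hg : Measurable fun u : ℝ => min u (1 - u) := by fun_prop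
  have hleft : (volume.restrict (Icc (0 : ℝ) (1 / 2))).map (fun u => min u (1 - u))
      = volume.restrict (Icc (0 : ℝ) (1 / 2)) := by
    rw [Measure.map_congr (g := id), Measure.map_id]
    filter_upwards [ae_restrict_mem measurableSet_Icc] with u hu
    exact min_eq_left (by linarith [hu.2])
  have hright : (volume.restrict (Ioc (1 / 2 : ℝ) 1)).map (fun u => min u (1 - u))
      = volume.restrict (Icc (0 : ℝ) (1 / 2)) := by
    have h := (Measure.measurePreserving_sub_left volume (1 : ℝ)).restrict_preimage
      (measurableSet_Ico (a := 0) (b := 1 / 2))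
    rw [preimage_const_sub_Ico, sub_zero, (by norm_num : (1 : ℝ) - 1 / 2 = 1 / 2)] at h
    rw [Measure.map_congr (g := fun u => 1 - u), h.map_eq,
      Measure.restrict_congr_set Ico_ae_eq_Icc]
    filter_upwards [ae_restrict_mem measurableSet_Ioc] with u hu
    exact min_eq_right (by linarith [hu.1])
  rw [← Icc_union_Ioc_eq_Icc (by norm_num : (0 : ℝ) ≤ 1 / 2) (by norm_num),
    Measure.restrict_union ((Iic_disjoint_Ioc le_rfl).mono_left Icc_subset_Iic_self)
      measurableSet_Ioc, Measure.map_add _ _ hg, hleft, hright, two_smul]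

theorem TVD_map_min_cdf_le {μ ν : Measure ℝ} [IsProbabilityMeasure μ] [IsProbabilityMeasure ν]
    (hμ : μ ≪ volume) (hν : ν ≪ volume) :
    TVD (μ.map fun x => min (cdf ν x) (1 - cdf ν x))
      ((2 : ℝ≥0∞) • volume.restrict (Icc (0 : ℝ) (1 / 2))) ≤ TVD μ ν := by
  have : NullSingletonClass ν := ⟨fun _ => hν Real.volume_singleton⟩
  have hT : Measurable fun x => min (cdf ν x) (1 - cdf ν x) := by
    have := (continuous_cdf ν).measurable
    fun_prop
  have hlaw : ν.map (fun x => min (cdf ν x) (1 - cdf ν x))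
      = (2 : ℝ≥0∞) • volume.restrict (Icc (0 : ℝ) (1 / 2)) := by
    rw [← map_min_one_sub_restrict_Icc, ← map_cdf_eq_restrict_Icc ν,
      Measure.map_map (by fun_prop) (continuous_cdf ν).measurable]
    rfl
  rw [← hlaw]
  exact TVD_map_le hμ hν hT (hlaw ▸ Measure.restrict_le_self.absolutelyContinuous.smul_left _)

theorem hd_induced_tvd_le_general
    (P Q : Measure ℝ) [IsProbabilityMeasure P] [IsProbabilityMeasure Q]
    (fX fY : ℝ → ℝ)
    (hP : P = volume.withDensity (fun x => ENNReal.ofReal (fX x)))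
    (hQ : Q = volume.withDensity (fun x => ENNReal.ofReal (fY x)))
    (FX FY : ℝ → ℝ)
    (hFX : ∀ x, FX x = (P (Iic x)).toReal)
    (hFY : ∀ x, FY x = (Q (Iic x)).toReal) :
    TVD (Measure.map (fun x => min (FY x) (1 - FY x)) P)
        ((2 : ℝ≥0∞) • volume.restrict (Icc (0 : ℝ) (1 / 2))) ≤ TVD P Q ∧
    TVD (Measure.map (fun y => min (FX y) (1 - FX y)) Q)
        ((2 : ℝ≥0∞) • volume.restrict (Icc (0 : ℝ) (1 / 2))) ≤ TVD P Q := by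
  have hPac : P ≪ volume := hP ▸ withDensity_absolutelyContinuous _ _
  have hQac : Q ≪ volume := hQ ▸ withDensity_absolutelyContinuous _ _
  obtain rfl : FX = cdf P := funext fun x => by rw [hFX, cdf_eq_real, measureReal_def]
  obtain rfl : FY = cdf Q := funext fun x => by rw [hFY, cdf_eq_real, measureReal_def]
  exact ⟨TVD_map_min_cdf_le hPac hQac, TVD_comm P Q ▸ TVD_map_min_cdf_le hQac hPac⟩

/-- Let `P, Q` have everywhere positive continuous densities `fX, fY` and CDFs `FX, FY`.
With `Q_P^{HD}` the law of `min (FY X) (1 - FY X)` for `X ~ P`, `P_Q^{HD}` the law of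
`min (FX Y) (1 - FX Y)` for `Y ~ Q`, and `U` the uniform distribution on `[0, 1/2]`,
we have `TVD(Q_P^{HD}, U) ≤ TVD(P, Q)` and `TVD(P_Q^{HD}, U) ≤ TVD(P, Q)`. -/
theorem hd_induced_tvd_le
    (P Q : Measure ℝ) [IsProbabilityMeasure P] [IsProbabilityMeasure Q]
    (fX fY : ℝ → ℝ) (hfXpos : ∀ x, 0 < fX x) (hfYpos : ∀ x, 0 < fY x)
    (hfXc : Continuous fX) (hfYc : Continuous fY)
    (hP : P = volume.withDensity (fun x => ENNReal.ofReal (fX x)))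
    (hQ : Q = volume.withDensity (fun x => ENNReal.ofReal (fY x)))
    (FX FY : ℝ → ℝ)
    (hFX : ∀ x, FX x = (P (Iic x)).toReal)
    (hFY : ∀ x, FY x = (Q (Iic x)).toReal) :
    TVD (Measure.map (fun x => min (FY x) (1 - FY x)) P)
        ((2 : ℝ≥0∞) • volume.restrict (Icc (0 : ℝ) (1 / 2))) ≤ TVD P Q ∧
    TVD (Measure.map (fun y => min (FX y) (1 - FX y)) Q)
        ((2 : ℝ≥0∞) • volume.restrict (Icc (0 : ℝ) (1 / 2))) ≤ TVD P Q :=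
  hd_induced_tvd_le_general P Q fX fY hP hQ FX FY hFX hFY
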